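/- Rockafellar–Uryasev representation in the finite uniform case: for k = ⌈αn⌉ with k dividing the tail exactly (α = k/n), the mean of the k smallest values of f equals max over η ∈ ℝ of [η − (1/k) Σ_{s∈S} max(η − f(s), 0)], and the maximum is attained at η equal to the k-th smallest value of f. -/

import Mathlib

open Finset

/-- Tail average: mean of the `k` smallest values of `f` over `S`. -/
noncomputable def cvarTail {X : Type*} (S : Finset X) (f : X → ℝ) (k : ℕ) : ℝ :=
  (((S.val.map f).sort (· ≤ ·)).take k).sum / k

/-- CVaR at level `a`: mean of the worst `⌈a * |S|⌉` scenarios. -/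
noncomputable def cvar {X : Type*} (S : Finset X) (f : X → ℝ) (a : ℝ) : ℝ :=
  cvarTail S f ⌈a * S.card⌉₊

private lemma sum_map_const_sub (c : ℝ) (t : List ℝ) :
    (t.map (fun x => c - x)).sum = t.length * c - t.sum := by
  induction t with
  | nil => simp
  | cons a t ih => simp [ih]; ring

theorem rockafellar_uryasev {X : Type*} (S : Finset X) (f : X → ℝ)
    (k : ℕ) (hk : 1 ≤ k) (hkn : k ≤ S.card) :
    IsGreatest (Set.range fun eta : ℝ => eta - (∑ s ∈ S, max (eta - f s) 0) / k)
      (cvarTail S f k) ∧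
    (((S.val.map f).sort (· ≤ ·)).getD (k - 1) 0 -
        (∑ s ∈ S, max (((S.val.map f).sort (· ≤ ·)).getD (k - 1) 0 - f s) 0) / k =
      cvarTail S f k) := by
  set l := ((S.val.map f).sort (· ≤ ·)) with hl
  have hlen : l.length = S.card := by
    rw [hl, Multiset.length_sort, Multiset.card_map]; rfl
  have hsorted : l.Pairwise (· ≤ ·) := Multiset.pairwise_sort _ _
  have hkl : k ≤ l.length := hlen ▸ hkn
  have hk0 : (0:ℝ) < k := by positivity
  have hsum : ∀ g : ℝ → ℝ, ∑ s ∈ S, g (f s) = (l.map g).sum := by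
    intro g
    have h1 : ((l : Multiset ℝ).map g) = (S.val.map f).map g := by
      rw [hl, Multiset.sort_eq]
    calc ∑ s ∈ S, g (f s) = ((S.val.map f).map g).sum := by
          rw [Multiset.map_map]; rfl
      _ = ((l : Multiset ℝ).map g).sum := by rw [h1]
      _ = (l.map g).sum := by simp
  have htlen : (l.take k).length = k := by simp [hkl]
  -- upper bound for arbitrary eta
  have key : ∀ eta : ℝ, eta * k - (l.map fun x => max (eta - x) 0).sum ≤ (l.take k).sum := by
    intro eta
    have h1 : ((l.take k).map fun x => max (eta - x) 0).sum ≤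
        (l.map fun x => max (eta - x) 0).sum := by
      apply List.Sublist.sum_le_sum ((List.take_sublist k l).map _)
      intro a ha
      simp only [List.mem_map] at ha
      obtain ⟨b, _, rfl⟩ := ha
      positivity
    have h2 : ((l.take k).map fun x => eta - x).sum ≤
        ((l.take k).map fun x => max (eta - x) 0).sum := by
      apply List.sum_le_sum
      intro i _; exact le_max_left _ _
    have h3 := (sum_map_const_sub eta (l.take k)) ▸ h2
    rw [htlen] at h3
    linarith
  -- behavior at eta* = l[k-1]
  have hk1 : k - 1 < l.length := lt_of_lt_of_le (Nat.sub_lt hk Nat.one_pos) hkl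
  have hgd : l.getD (k-1) 0 = l[k-1]'hk1 := List.getD_eq_getElem l 0 hk1
  set eta : ℝ := l.getD (k-1) 0 with heta
  have htake : ∀ x ∈ l.take k, x ≤ eta := by
    intro x hx
    rw [List.mem_take_iff_getElem] at hx
    obtain ⟨i, hi, rfl⟩ := hx
    rw [hgd]
    have hik : i < l.length := lt_of_lt_of_le (lt_min_iff.mp hi).1 hkl
    exact hsorted.rel_get_of_le (a := ⟨i, hik⟩) (b := ⟨k-1, hk1⟩)
      (by simpa using Nat.le_sub_one_of_lt (lt_min_iff.mp hi).1)
  have hdrop : ∀ x ∈ l.drop k, eta ≤ x := by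
    intro x hx
    rw [hgd]
    refine hsorted.rel_of_mem_take_of_mem_drop (i := k) ?_ hx
    rw [List.mem_take_iff_getElem]
    exact ⟨k-1, by omega, rfl⟩
  have hattain : (l.map fun x => max (eta - x) 0).sum = k * eta - (l.take k).sum := by
    have hsplit : (l.map fun x => max (eta - x) 0).sum =
        ((l.take k).map fun x => max (eta - x) 0).sum +
        ((l.drop k).map fun x => max (eta - x) 0).sum := by
      rw [← List.sum_append, ← List.map_append, List.take_append_drop]
    have e1 : ((l.take k).map fun x => max (eta - x) 0) = (l.take k).map fun x => eta - x := by
      apply List.map_congr_left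
      intro a ha
      exact max_eq_left (by linarith [htake a ha])
    have e2 : ((l.drop k).map fun x => max (eta - x) 0).sum = 0 := by
      rw [List.sum_eq_zero]
      intro x hx
      simp only [List.mem_map] at hx
      obtain ⟨a, ha, rfl⟩ := hx
      exact max_eq_right (by linarith [hdrop a ha])
    rw [hsplit, e1, e2, sum_map_const_sub, htlen]
    ring
  have hattain' : eta - (∑ s ∈ S, max (eta - f s) 0) / k = cvarTail S f k := by
    rw [hsum (fun x => max (eta - x) 0), hattain]
    unfold cvarTail
    rw [← hl]
    field_simp
    ring
  refine ⟨⟨⟨eta, hattain'⟩, ?_⟩, hattain'⟩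
  rintro y ⟨e, rfl⟩
  have hke := key e
  unfold cvarTail
  rw [← hl]
  simp only
  rw [hsum (fun x => max (e - x) 0)]
  calc e - (l.map fun x => max (e - x) 0).sum / k
      = (e * k - (l.map fun x => max (e - x) 0).sum) / k := by field_simp
    _ ≤ (l.take k).sum / k := by gcongr
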